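/- Let λ ∈ ℂ with Re λ > 0. Define the kernel k_λ(t,s) := λ e^(−(s−t)λ)(1 − e^(−2tλ)) for 0 < t ≤ s. Then there is an absolute constant C (uniform over λ in any sector |arg λ| ≤ ν < π/2, depending only on ν) with: (a) ∫ from t to ∞ of |k_λ(t,s)| s ds ≤ C t for all t > 0, and (b) ∫₀^s |k_λ(t,s)| dt ≤ C for all s > 0. -/

import Mathlib

/-!
Write `a = Re λ` and `ρ = ‖λ‖ / a`; in the sector `|arg λ| ≤ ν` one has `ρ ≤ 1 / cos ν`.
Since `‖k_λ(t,s)‖ = ‖λ‖ e^{-(s-t)a} ‖1 - e^{-2tλ}‖` and `‖1 - e^{-2tλ}‖ ≤ min 2 (2t‖λ‖)`,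
in (a) split `s = (s - t) + t` and use the bound `2t‖λ‖` on the first part, `2` on the second:
with `∫₀^∞ u e^{-au} du = 1/a²` and `∫₀^∞ e^{-au} du = 1/a` this gives `2t(ρ² + ρ)`.
In (b) the bound `2` gives `2ρ`.
-/

open MeasureTheory Set

theorem Complex.norm_exp_sub_one_le_norm {z : ℂ} (hz : z.re ≤ 0) : ‖exp z - 1‖ ≤ ‖z‖ := by
  -- `exp` is `1`-Lipschitz on the convex half-plane `re ≤ 0`.
  have hconv : Convex ℝ {w : ℂ | w.re ≤ 0} := (convex_Iic 0).linear_preimage reLm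
  simpa using hconv.norm_image_sub_le_of_norm_hasDerivWithin_le
    (f := exp) (C := 1) (fun x _ => (hasDerivAt_exp x).hasDerivWithinAt)
    (fun x hx => by simpa [norm_exp] using Real.exp_le_one_iff.mpr hx)
    (show (0 : ℂ) ∈ {w : ℂ | w.re ≤ 0} by simp) hz

theorem Complex.norm_one_sub_exp_neg_le {w : ℂ} (hw : 0 ≤ w.re) :
    ‖1 - exp (-w)‖ ≤ min 2 ‖w‖ := by
  have hre : (-w).re ≤ 0 := by simpa using hw
  refine le_min ?_ ?_
  · calc ‖1 - exp (-w)‖ ≤ ‖(1 : ℂ)‖ + ‖exp (-w)‖ := norm_sub_le _ _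
      _ ≤ 1 + 1 := by gcongr <;> simp [norm_exp, hw]
      _ = 2 := by norm_num
  · simpa [norm_sub_rev] using norm_exp_sub_one_le_norm hre

theorem Complex.norm_mul_cos_le_re {z : ℂ} {ν : ℝ} (h : |z.arg| ≤ ν) (hν : ν ≤ Real.pi) :
    ‖z‖ * Real.cos ν ≤ z.re := by
  rw [← norm_mul_cos_arg, ← Real.cos_abs z.arg]
  gcongr
  exact Real.cos_le_cos_of_nonneg_of_le_pi (abs_nonneg _) hν h

section Translation

variable {E : Type*} [NormedAddCommGroup E]

theorem integral_Ioi_comp_sub [NormedSpace ℝ E] (f : ℝ → E) (t : ℝ) :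
    ∫ s in Ioi t, f (s - t) = ∫ u in Ioi 0, f u := by
  have h := (measurePreserving_sub_right volume t).setIntegral_preimage_emb
    (MeasurableEquiv.subRight t).measurableEmbedding f (Ioi 0)
  rwa [show (· - t) ⁻¹' Ioi 0 = Ioi t by ext; simp] at h

theorem integrableOn_Ioi_comp_sub_iff (f : ℝ → E) (t : ℝ) :
    IntegrableOn (fun s => f (s - t)) (Ioi t) ↔ IntegrableOn f (Ioi 0) := by
  have h := (measurePreserving_sub_right volume t).integrableOn_comp_preimage
    (MeasurableEquiv.subRight t).measurableEmbedding (f := f) (s := Ioi 0)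
  rwa [show (· - t) ⁻¹' Ioi 0 = Ioi t by ext; simp] at h

theorem integral_Ioo_comp_sub_left [NormedSpace ℝ E] (f : ℝ → E) {s : ℝ} (hs : 0 ≤ s) :
    ∫ t in Ioo 0 s, f (s - t) = ∫ u in Ioo 0 s, f u := by
  simp only [← integral_Ioc_eq_integral_Ioo, ← intervalIntegral.integral_of_le hs,
    intervalIntegral.integral_comp_sub_left, sub_self, sub_zero]

end Translation

section ExpIntegrals

variable {a : ℝ}

theorem integral_exp_neg_mul_Ioi_zero (ha : 0 < a) :
    ∫ u in Ioi (0 : ℝ), Real.exp (-(a * u)) = 1 / a := by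
  have h := integral_exp_mul_Ioi (neg_lt_zero.mpr ha) 0
  simp only [neg_mul, mul_zero, Real.exp_zero] at h
  rw [h]; field_simp

theorem integrableOn_exp_neg_mul_Ioi_zero (ha : 0 < a) :
    IntegrableOn (fun u => Real.exp (-(a * u))) (Ioi 0) := by
  simpa using integrableOn_exp_mul_Ioi (neg_lt_zero.mpr ha) 0

theorem integral_mul_exp_neg_mul_Ioi_zero (ha : 0 < a) :
    ∫ u in Ioi (0 : ℝ), u * Real.exp (-(a * u)) = 1 / a ^ 2 := by
  have h := Real.integral_rpow_mul_exp_neg_mul_Ioi two_pos ha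
  norm_num [Real.Gamma_two] at h
  simpa using h

theorem integrableOn_mul_exp_neg_mul_Ioi_zero (ha : 0 < a) :
    IntegrableOn (fun u => u * Real.exp (-(a * u))) (Ioi 0) :=
  Integrable.of_integral_ne_zero <| by rw [integral_mul_exp_neg_mul_Ioi_zero ha]; positivity

end ExpIntegrals

noncomputable def dampedKernel (lam : ℂ) (t s : ℝ) : ℂ :=
  lam * Complex.exp (-(((s : ℂ) - (t : ℂ)) * lam)) * (1 - Complex.exp (-(2 * (t : ℂ) * lam)))

section DampedKernel

variable {lam : ℂ}

theorem norm_dampedKernel_le {t : ℝ} (s : ℝ) (ht : 0 ≤ t) (hre : 0 ≤ lam.re) :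
    ‖dampedKernel lam t s‖ ≤
      ‖lam‖ * Real.exp (-(lam.re * (s - t))) * min 2 (2 * t * ‖lam‖) := by
  have hw : 0 ≤ (2 * (t : ℂ) * lam).re := by simp [Complex.mul_re]; positivity
  have hnorm : ‖2 * (t : ℂ) * lam‖ = 2 * t * ‖lam‖ := by simp [abs_of_nonneg ht]
  rw [dampedKernel, norm_mul, norm_mul, Complex.norm_exp, ← hnorm]
  gcongr
  · simp [Complex.mul_re, mul_comm]
  · exact Complex.norm_one_sub_exp_neg_le hw

theorem integral_norm_dampedKernel_mul_le (hre : 0 < lam.re) {t : ℝ} (ht : 0 < t) :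
    ∫ s in Ioi t, ‖dampedKernel lam t s‖ * s ≤
      2 * t * ((‖lam‖ / lam.re) ^ 2 + ‖lam‖ / lam.re) := by
  set a := lam.re
  set r := ‖lam‖
  let g : ℝ → ℝ := fun u =>
    2 * t * r ^ 2 * (u * Real.exp (-(a * u))) + 2 * t * r * Real.exp (-(a * u))
  have hg : IntegrableOn g (Ioi 0) :=
    ((integrableOn_mul_exp_neg_mul_Ioi_zero hre).const_mul _).add
      ((integrableOn_exp_neg_mul_Ioi_zero hre).const_mul _)
  have hbound : ∀ s ∈ Ioi t, ‖dampedKernel lam t s‖ * s ≤ g (s - t) := by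
    intro s (hs : t < s)
    have hk := norm_dampedKernel_le s ht.le hre.le
    calc ‖dampedKernel lam t s‖ * s
        = ‖dampedKernel lam t s‖ * (s - t) + ‖dampedKernel lam t s‖ * t := by ring
      _ ≤ r * Real.exp (-(a * (s - t))) * (2 * t * r) * (s - t)
          + r * Real.exp (-(a * (s - t))) * 2 * t := by
        gcongr
        · exact hk.trans (by gcongr; exact min_le_right _ _)
        · exact hk.trans (by gcongr; exact min_le_left _ _)
      _ = g (s - t) := by ring
  calc ∫ s in Ioi t, ‖dampedKernel lam t s‖ * s ≤ ∫ s in Ioi t, g (s - t) :=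
        setIntegral_mono_of_nonneg (fun s (hs : t < s) => mul_nonneg (norm_nonneg _) (ht.trans hs).le) hbound
          ((integrableOn_Ioi_comp_sub_iff g t).mpr hg)
    _ = ∫ u in Ioi 0, g u := integral_Ioi_comp_sub g t
    _ = 2 * t * r ^ 2 * (1 / a ^ 2) + 2 * t * r * (1 / a) := by
        rw [integral_add ((integrableOn_mul_exp_neg_mul_Ioi_zero hre).const_mul _)
            ((integrableOn_exp_neg_mul_Ioi_zero hre).const_mul _), integral_const_mul,
          integral_const_mul, integral_mul_exp_neg_mul_Ioi_zero hre,
          integral_exp_neg_mul_Ioi_zero hre]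
    _ = 2 * t * ((r / a) ^ 2 + r / a) := by ring

theorem integral_norm_dampedKernel_le (hre : 0 < lam.re) {s : ℝ} (hs : 0 ≤ s) :
    ∫ t in Ioo 0 s, ‖dampedKernel lam t s‖ ≤ 2 * (‖lam‖ / lam.re) := by
  set a := lam.re
  set r := ‖lam‖
  let g : ℝ → ℝ := fun u => 2 * r * Real.exp (-(a * u))
  have hg : IntegrableOn g (Ioi 0) := (integrableOn_exp_neg_mul_Ioi_zero hre).const_mul _
  have hbound : ∀ t ∈ Ioo 0 s, ‖dampedKernel lam t s‖ ≤ g (s - t) := fun t ht =>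
    calc ‖dampedKernel lam t s‖ ≤ r * Real.exp (-(a * (s - t))) * min 2 (2 * t * r) :=
          norm_dampedKernel_le s ht.1.le hre.le
      _ ≤ r * Real.exp (-(a * (s - t))) * 2 := by gcongr; exact min_le_left _ _
      _ = g (s - t) := by ring
  have hg_reflect : IntegrableOn (fun t => g (s - t)) (Ioo 0 s) :=
    (by fun_prop : Continuous fun t => g (s - t)).integrableOn_Icc.mono_set Ioo_subset_Icc_self
  calc ∫ t in Ioo 0 s, ‖dampedKernel lam t s‖ ≤ ∫ t in Ioo 0 s, g (s - t) :=
        setIntegral_mono_of_nonneg (fun _ _ => norm_nonneg _) hbound hg_reflect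
    _ = ∫ u in Ioo 0 s, g u := integral_Ioo_comp_sub_left g hs
    _ ≤ ∫ u in Ioi 0, g u :=
        setIntegral_mono_set hg (.of_forall fun u => by positivity) Ioo_subset_Ioi_self.eventuallyLE
    _ = 2 * (r / a) := by rw [integral_const_mul, integral_exp_neg_mul_Ioi_zero hre]; ring

end DampedKernel

theorem stmt_5 (ν : ℝ) (hν : ν < Real.pi / 2) :
    ∃ C : ℝ, 0 < C ∧ ∀ lam : ℂ, |lam.arg| ≤ ν →
      (∀ t : ℝ, 0 < t →
        (∫ s in Ioi t,
            ‖lam * Complex.exp (-(((s : ℂ) - (t : ℂ)) * lam)) *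
              (1 - Complex.exp (-(2 * (t : ℂ) * lam)))‖ * s) ≤ C * t) ∧
      (∀ s : ℝ, 0 < s →
        (∫ t in Ioo (0:ℝ) s,
            ‖lam * Complex.exp (-(((s : ℂ) - (t : ℂ)) * lam)) *
              (1 - Complex.exp (-(2 * (t : ℂ) * lam)))‖) ≤ C) := by
  -- `max ν 0` keeps `cos` positive also when `ν < 0`, where the sector is empty.
  have hν' : max ν 0 < Real.pi / 2 := max_lt hν (by positivity)
  set c := Real.cos (max ν 0)
  have hc : 0 < c := Real.cos_pos_of_mem_Ioo ⟨by linarith [le_max_right ν 0], hν'⟩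
  refine ⟨2 * ((1 / c) ^ 2 + 1 / c), by positivity, fun lam hlam => ?_⟩
  obtain rfl | hlam0 := eq_or_ne lam 0
  · exact ⟨fun t ht => by simp; positivity, fun s hs => by simp; positivity⟩
  have hcos : ‖lam‖ * c ≤ lam.re :=
    Complex.norm_mul_cos_le_re (hlam.trans (le_max_left ν 0)) (by linarith [Real.pi_pos])
  have hre : 0 < lam.re := (mul_pos (norm_pos_iff.mpr hlam0) hc).trans_le hcos
  have hρ : ‖lam‖ / lam.re ≤ 1 / c := by rw [div_le_div_iff₀ hre hc]; linarith
  refine ⟨fun t ht => ?_, fun s hs => ?_⟩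
  · calc _ ≤ 2 * t * ((‖lam‖ / lam.re) ^ 2 + ‖lam‖ / lam.re) :=
          integral_norm_dampedKernel_mul_le hre ht
      _ ≤ 2 * ((1 / c) ^ 2 + 1 / c) * t := by rw [mul_right_comm]; gcongr
  · calc _ ≤ 2 * (‖lam‖ / lam.re) := integral_norm_dampedKernel_le hre hs.le
      _ ≤ 2 * ((1 / c) ^ 2 + 1 / c) := by gcongr; linarith [sq_nonneg (1 / c)]
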